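/- Let k ≠ l be indices in {1, …, n} and let d = gcd(m_k, m_l). Define α, β : {p_1, …, p_n} → ℚ[G] by α(p_k) = Σ_{j=0}^{m_l−1} (j/d) p_l^j Q_l and α(p_i) = 0 for i ≠ k, and β(p_l) = Σ_{j=0}^{m_k−1} −(j/d) p_k^j Q_k and β(p_i) = 0 for i ≠ l. Then: (1) α(p_i)(e − p_j) + β(p_j)(e − p_i) ∈ ℤ[G] for all i, j, and in fact this expression equals (m_k/d)Q_k − (m_l/d)Q_l when (i,j) = (k,l) and equals 0 otherwise; (2) (α(p_k) + β(p_k))(e − p_l) = (1/d)N − (m_l/d)Q_l, so (α(p_k) + β(p_k))(e − p_l) − (1/d)N ∈ ℤ[G]; and (3) (α(p_i) + β(p_i))(e − p_j) = 0 whenever {i,j} ≠ {k,l}. -/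

import Mathlib

open MonoidAlgebra Finset

/-- The integral group ring ℤ[G]. -/
noncomputable abbrev ZG (G : Type) [CommGroup G] := MonoidAlgebra ℤ G

/-- The rational group ring ℚ[G]. -/
noncomputable abbrev QG (G : Type) [CommGroup G] := MonoidAlgebra ℚ G

/-- The canonical embedding ℤ[G] → ℚ[G]. -/
noncomputable def toQ (G : Type) [CommGroup G] : ZG G →ₐ[ℤ] QG G :=
  MonoidAlgebra.lift ℤ (QG G) G (MonoidAlgebra.of ℚ G)

/-- "x ∈ ℤ[G]" for an element x of ℚ[G]. -/
def MemZG (G : Type) [CommGroup G] (x : QG G) : Prop := ∃ z : ZG G, toQ G z = x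

/-- G = ℤ_{m₁} × ℤ_{m₂} × ⋯ × ℤ_{mₙ}, written multiplicatively. -/
abbrev Gr {n : ℕ} (m : Fin n → ℕ) : Type := (i : Fin n) → Multiplicative (ZMod (m i))

/-- pᵢ, the generator of the i-th factor of G. -/
def pgen {n : ℕ} (m : Fin n → ℕ) (i : Fin n) : Gr m :=
  Pi.mulSingle i (Multiplicative.ofAdd 1)

/-- Pᵢ = e + pᵢ + pᵢ² + ⋯ + pᵢ^{mᵢ−1} ∈ ℤ[G]. -/
noncomputable def Pel {n : ℕ} (m : Fin n → ℕ) (i : Fin n) : ZG (Gr m) :=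
  ∑ k ∈ Finset.range (m i), (MonoidAlgebra.of ℤ (Gr m) (pgen m i)) ^ k

/-- Qᵢ = ∏_{j ≠ i} Pⱼ ∈ ℤ[G]. -/
noncomputable def Qel {n : ℕ} (m : Fin n → ℕ) (i : Fin n) : ZG (Gr m) :=
  ∏ j ∈ Finset.univ.erase i, Pel m j

/-- N = Σ_{g ∈ G} g ∈ ℤ[G]. -/
noncomputable def Nel {n : ℕ} (m : Fin n → ℕ) [∀ i, NeZero (m i)] : ZG (Gr m) :=
  ∑ g : Gr m, MonoidAlgebra.of ℤ (Gr m) g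

/-!
With x = pₗ, the telescoping identity (Σ_{j<M} j xʲ)(1 − x) = Σ_{j<M} xʲ − M, valid when xᴹ = 1,
gives α(pₖ)(e − pₗ) = (1/d)(Pₗ − mₗ)Qₗ = (1/d)N − (mₗ/d)Qₗ, and symmetrically
β(pₗ)(e − pₖ) = (mₖ/d)Qₖ − (1/d)N. All other products vanish: for j ≠ l the factor Pⱼ of Qₗ
annihilates e − pⱼ, because Pⱼ(e − pⱼ) = e − pⱼ^{mⱼ} = 0. Integrality comes from d ∣ mₖ, d ∣ mₗ.
-/

theorem sum_range_natCast_mul_pow_mul_one_sub {A : Type*} [CommRing A] (x : A) (M : ℕ) :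
    (∑ j ∈ range M, (j : A) * x ^ j) * (1 - x)
      = ∑ j ∈ range M, x ^ j - 1 - ((M : A) - 1) * x ^ M := by
  induction M with
  | zero => simp
  | succ M ih =>
    rw [sum_range_succ, sum_range_succ, add_mul, ih]
    push_cast
    ring

theorem sum_div_smul_pow_mul_mul_one_sub {K A : Type*} [Field K] [CommRing A] [Algebra K A]
    {x : A} {M : ℕ} (hx : x ^ M = 1) (Q : A) (d : K) :
    (∑ j ∈ range M, ((j : K) / d) • (x ^ j * Q)) * (1 - x)
      = (1 / d) • ((∑ j ∈ range M, x ^ j) * Q) - ((M : K) / d) • Q := by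
  have hsum : ∑ j ∈ range M, ((j : K) / d) • (x ^ j * Q)
      = (1 / d) • ((∑ j ∈ range M, (j : A) * x ^ j) * Q) := by
    simp only [Finset.sum_mul, Finset.smul_sum, div_eq_mul_inv, one_mul]
    refine sum_congr rfl fun j _ => ?_
    rw [mul_comm, mul_smul, Nat.cast_smul_eq_nsmul, nsmul_eq_mul, mul_assoc]
  have htel := sum_range_natCast_mul_pow_mul_one_sub x M
  rw [hx] at htel
  rw [hsum, smul_mul_assoc, mul_right_comm, htel, mul_one, sub_sub, add_sub_cancel,
    show (M : K) / d = 1 / d * M by ring, mul_smul, ← smul_sub, Nat.cast_smul_eq_nsmul,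
    nsmul_eq_mul, sub_mul]

theorem sum_smul_pow_mul_mul_eq_zero {K A : Type*} [CommSemiring K] [CommRing A] [Algebra K A]
    {Q y : A} (hQ : Q * y = 0) (x : A) (M : ℕ) (c : ℕ → K) :
    (∑ j ∈ range M, c j • (x ^ j * Q)) * y = 0 := by
  rw [Finset.sum_mul]
  exact sum_eq_zero fun j _ => by rw [smul_mul_assoc, mul_assoc, hQ, mul_zero, smul_zero]

section MemZG

variable {G : Type} [CommGroup G]

theorem toQ_of (g : G) : toQ G (of ℤ G g) = of ℚ G g :=
  lift_of _ _

theorem memZG_zero : MemZG G 0 :=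
  ⟨0, map_zero _⟩

theorem MemZG.neg {x : QG G} : MemZG G x → MemZG G (-x)
  | ⟨z, hz⟩ => ⟨-z, by rw [map_neg, hz]⟩

theorem MemZG.sub {x y : QG G} : MemZG G x → MemZG G y → MemZG G (x - y)
  | ⟨z, hz⟩, ⟨w, hw⟩ => ⟨z - w, by rw [map_sub, hz, hw]⟩

theorem memZG_natCast_div_smul {a d : ℕ} (h : d ∣ a) (z : ZG G) :
    MemZG G (((a : ℚ) / d) • toQ G z) :=
  ⟨((a / d : ℕ) : ℤ) • z, by
    rw [map_zsmul, ← Int.cast_smul_eq_zsmul ℚ, Int.cast_natCast, Nat.cast_div_charZero h]⟩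

end MemZG

section GroupRing

variable {n : ℕ} (m : Fin n → ℕ)

theorem pgen_pow (i : Fin n) (j : ℕ) :
    pgen m i ^ j = Pi.mulSingle i (Multiplicative.ofAdd (j : ZMod (m i))) := by
  rw [pgen, ← Pi.mulSingle_pow, ← ofAdd_nsmul, nsmul_one]

theorem pgen_pow_self (i : Fin n) : pgen m i ^ m i = 1 := by
  rw [pgen_pow, ZMod.natCast_self, ofAdd_zero, Pi.mulSingle_one]

theorem Pel_mul_one_sub (i : Fin n) : Pel m i * (1 - of ℤ (Gr m) (pgen m i)) = 0 := by
  rw [Pel, geom_sum_mul_neg, ← map_pow, pgen_pow_self, map_one, sub_self]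

theorem Qel_mul_one_sub {i j : Fin n} (hij : i ≠ j) :
    Qel m j * (1 - of ℤ (Gr m) (pgen m i)) = 0 := by
  rw [Qel, ← mul_prod_erase _ _ (mem_erase.2 ⟨hij, mem_univ i⟩), mul_right_comm,
    Pel_mul_one_sub, zero_mul]

theorem sum_range_natCast_zmod {M : ℕ} [NeZero M] {A : Type*} [AddCommMonoid A]
    (f : ZMod M → A) : ∑ j ∈ range M, f j = ∑ a : ZMod M, f a :=
  sum_nbij' (fun j => (j : ZMod M)) ZMod.val (fun _ _ => mem_univ _)
    (fun a _ => mem_range.2 (ZMod.val_lt a)) (fun _ hj => ZMod.val_cast_of_lt (mem_range.1 hj))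
    (fun a _ => ZMod.natCast_zmod_val a) (fun _ _ => rfl)

theorem toQ_Pel (i : Fin n) :
    toQ (Gr m) (Pel m i) = ∑ j ∈ range (m i), of ℚ (Gr m) (pgen m i) ^ j := by
  simp only [Pel, map_sum, map_pow, toQ_of]

theorem toQ_Qel_mul_one_sub {i j : Fin n} (hij : i ≠ j) :
    toQ (Gr m) (Qel m j) * (1 - of ℚ (Gr m) (pgen m i)) = 0 := by
  rw [← toQ_of, ← map_one (toQ (Gr m)), ← map_sub, ← map_mul, Qel_mul_one_sub m hij, map_zero]

variable [∀ i, NeZero (m i)]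

theorem prod_Pel : ∏ i, Pel m i = Nel m := by
  have hP : ∀ i, Pel m i
      = ∑ a : ZMod (m i), of ℤ (Gr m) (Pi.mulSingle i (Multiplicative.ofAdd a)) := fun i => by
    rw [Pel, ← sum_range_natCast_zmod]
    exact sum_congr rfl fun j _ => by rw [← map_pow, pgen_pow]
  simp_rw [hP]
  rw [prod_univ_sum, Fintype.piFinset_univ, Nel]
  refine Fintype.sum_equiv (Equiv.piCongrRight fun _ => Multiplicative.ofAdd) _ _ fun x => ?_
  rw [← map_prod, univ_prod_mulSingle]
  rfl

theorem Pel_mul_Qel (i : Fin n) : Pel m i * Qel m i = Nel m := by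
  rw [Qel, mul_prod_erase _ _ (mem_univ i), prod_Pel]

theorem sum_div_smul_pgen_pow_mul_Qel_mul_one_sub (l : Fin n) (d : ℚ) :
    (∑ j ∈ range (m l), ((j : ℚ) / d) •
        (of ℚ (Gr m) (pgen m l) ^ j * toQ (Gr m) (Qel m l))) * (1 - of ℚ (Gr m) (pgen m l))
      = (1 / d) • toQ (Gr m) (Nel m) - ((m l : ℚ) / d) • toQ (Gr m) (Qel m l) := by
  rw [sum_div_smul_pow_mul_mul_one_sub (by rw [← map_pow, pgen_pow_self, map_one]), ← toQ_Pel,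
    ← map_mul, Pel_mul_Qel]

end GroupRing

section Pairing

variable {R ι : Type*} [CommRing R] [DecidableEq ι] {k l : ι} {a b : R} {y : ι → R}

theorem ite_mul_add_ite_mul (ha : ∀ j ≠ l, a * y j = 0) (hb : ∀ i ≠ k, b * y i = 0) (i j : ι) :
    (if i = k then a else 0) * y j + (if j = l then b else 0) * y i
      = if i = k ∧ j = l then a * y l + b * y k else 0 := by
  by_cases hi : i = k <;> by_cases hj : j = l <;> simp [hi, hj, ha, hb]

theorem ite_add_ite_mul_eq_zero (hkl : k ≠ l) (ha : ∀ j ≠ l, a * y j = 0)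
    (hb : ∀ i ≠ k, b * y i = 0) {i j : ι} (hij : ¬((i = k ∧ j = l) ∨ (i = l ∧ j = k))) :
    ((if i = k then a else 0) + (if i = l then b else 0)) * y j = 0 := by
  by_cases hi : i = k <;> by_cases hil : i = l <;> simp_all

end Pairing

theorem statement11_general
    (n : ℕ) (m : Fin n → ℕ) [∀ i, NeZero (m i)]
    (k l : Fin n) (hkl : k ≠ l)
    (d : ℕ) (hd : d = Nat.gcd (m k) (m l))
    (α β : Fin n → QG (Gr m))
    (hα : α = fun i => if i = k then
      ∑ jj ∈ Finset.range (m l),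
        ((jj : ℚ) / (d : ℚ)) •
          ((MonoidAlgebra.of ℚ (Gr m) (pgen m l)) ^ jj * toQ (Gr m) (Qel m l))
      else 0)
    (hβ : β = fun i => if i = l then
      ∑ jj ∈ Finset.range (m k),
        (-((jj : ℚ) / (d : ℚ))) •
          ((MonoidAlgebra.of ℚ (Gr m) (pgen m k)) ^ jj * toQ (Gr m) (Qel m k))
      else 0) :
    (∀ i j,
      MemZG (Gr m)
        (α i * (1 - MonoidAlgebra.of ℚ (Gr m) (pgen m j))
          + β j * (1 - MonoidAlgebra.of ℚ (Gr m) (pgen m i)))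
      ∧
      α i * (1 - MonoidAlgebra.of ℚ (Gr m) (pgen m j))
          + β j * (1 - MonoidAlgebra.of ℚ (Gr m) (pgen m i))
        = if i = k ∧ j = l then
            ((m k : ℚ) / (d : ℚ)) • toQ (Gr m) (Qel m k)
              - ((m l : ℚ) / (d : ℚ)) • toQ (Gr m) (Qel m l)
          else 0)
    ∧
    ((α k + β k) * (1 - MonoidAlgebra.of ℚ (Gr m) (pgen m l))
        = ((1 : ℚ) / (d : ℚ)) • toQ (Gr m) (Nel m)
          - ((m l : ℚ) / (d : ℚ)) • toQ (Gr m) (Qel m l)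
      ∧
      MemZG (Gr m)
        ((α k + β k) * (1 - MonoidAlgebra.of ℚ (Gr m) (pgen m l))
          - ((1 : ℚ) / (d : ℚ)) • toQ (Gr m) (Nel m)))
    ∧
    (∀ i j, ¬((i = k ∧ j = l) ∨ (i = l ∧ j = k)) →
      (α i + β i) * (1 - MonoidAlgebra.of ℚ (Gr m) (pgen m j)) = 0) := by
  subst hα hβ
  simp only [neg_smul, sum_neg_distrib]
  have ha : ∀ j ≠ l, (∑ jj ∈ range (m l), ((jj : ℚ) / d) •
      (of ℚ (Gr m) (pgen m l) ^ jj * toQ (Gr m) (Qel m l))) * (1 - of ℚ (Gr m) (pgen m j)) = 0 :=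
    fun j hj => sum_smul_pow_mul_mul_eq_zero (toQ_Qel_mul_one_sub m hj) _ _ _
  have hb : ∀ i ≠ k, (-∑ jj ∈ range (m k), ((jj : ℚ) / d) •
      (of ℚ (Gr m) (pgen m k) ^ jj * toQ (Gr m) (Qel m k))) * (1 - of ℚ (Gr m) (pgen m i)) = 0 :=
    fun i hi => by rw [neg_mul, sum_smul_pow_mul_mul_eq_zero (toQ_Qel_mul_one_sub m hi), neg_zero]
  have hαl := sum_div_smul_pgen_pow_mul_Qel_mul_one_sub m l d
  have hβk := sum_div_smul_pgen_pow_mul_Qel_mul_one_sub m k d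
  have hQk := memZG_natCast_div_smul (hd ▸ Nat.gcd_dvd_left _ _) (Qel m k)
  have hQl := memZG_natCast_div_smul (hd ▸ Nat.gcd_dvd_right _ _) (Qel m l)
  refine ⟨fun i j => ?_, ?_, fun i j hij => ite_add_ite_mul_eq_zero hkl ha hb hij⟩
  · rw [ite_mul_add_ite_mul ha hb, neg_mul, hαl, hβk, neg_sub, sub_add_sub_cancel']
    refine ⟨?_, rfl⟩
    split_ifs
    exacts [hQk.sub hQl, memZG_zero]
  · rw [if_true, if_neg hkl, add_zero, hαl, sub_sub_cancel_left]
    exact ⟨rfl, hQl.neg⟩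

/-- The explicit element used in the surjectivity lemma: for k ≠ l and d = gcd(mₖ, mₗ), with
α(pₖ) = Σ_{j<mₗ} (j/d)pₗʲQₗ (and α = 0 elsewhere), β(pₗ) = −Σ_{j<mₖ} (j/d)pₖʲQₖ (and β = 0
elsewhere), one has: (1) α(pᵢ)(e−pⱼ) + β(pⱼ)(e−pᵢ) ∈ ℤ[G] for all i, j, being equal to
(mₖ/d)Qₖ − (mₗ/d)Qₗ when (i,j) = (k,l) and to 0 otherwise; (2) (α(pₖ)+β(pₖ))(e−pₗ)
= (1/d)N − (mₗ/d)Qₗ, so that (α(pₖ)+β(pₖ))(e−pₗ) − (1/d)N ∈ ℤ[G]; and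
(3) (α(pᵢ)+β(pᵢ))(e−pⱼ) = 0 whenever {i,j} ≠ {k,l}. -/
theorem statement11
    (n : ℕ) (hn : 1 ≤ n) (m : Fin n → ℕ) [∀ i, NeZero (m i)]
    (k l : Fin n) (hkl : k ≠ l)
    (d : ℕ) (hd : d = Nat.gcd (m k) (m l))
    (α β : Fin n → QG (Gr m))
    (hα : α = fun i => if i = k then
      ∑ jj ∈ Finset.range (m l),
        ((jj : ℚ) / (d : ℚ)) •
          ((MonoidAlgebra.of ℚ (Gr m) (pgen m l)) ^ jj * toQ (Gr m) (Qel m l))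
      else 0)
    (hβ : β = fun i => if i = l then
      ∑ jj ∈ Finset.range (m k),
        (-((jj : ℚ) / (d : ℚ))) •
          ((MonoidAlgebra.of ℚ (Gr m) (pgen m k)) ^ jj * toQ (Gr m) (Qel m k))
      else 0) :
    (∀ i j,
      MemZG (Gr m)
        (α i * (1 - MonoidAlgebra.of ℚ (Gr m) (pgen m j))
          + β j * (1 - MonoidAlgebra.of ℚ (Gr m) (pgen m i)))
      ∧
      α i * (1 - MonoidAlgebra.of ℚ (Gr m) (pgen m j))
          + β j * (1 - MonoidAlgebra.of ℚ (Gr m) (pgen m i))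
        = if i = k ∧ j = l then
            ((m k : ℚ) / (d : ℚ)) • toQ (Gr m) (Qel m k)
              - ((m l : ℚ) / (d : ℚ)) • toQ (Gr m) (Qel m l)
          else 0)
    ∧
    ((α k + β k) * (1 - MonoidAlgebra.of ℚ (Gr m) (pgen m l))
        = ((1 : ℚ) / (d : ℚ)) • toQ (Gr m) (Nel m)
          - ((m l : ℚ) / (d : ℚ)) • toQ (Gr m) (Qel m l)
      ∧
      MemZG (Gr m)
        ((α k + β k) * (1 - MonoidAlgebra.of ℚ (Gr m) (pgen m l))
          - ((1 : ℚ) / (d : ℚ)) • toQ (Gr m) (Nel m)))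
    ∧
    (∀ i j, ¬((i = k ∧ j = l) ∨ (i = l ∧ j = k)) →
      (α i + β i) * (1 - MonoidAlgebra.of ℚ (Gr m) (pgen m j)) = 0) :=
  statement11_general n m k l hkl d hd α β hα hβ
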